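/- arXiv:1007.5093 — 3 statements merged into one kernel-verified Lean document; each statement's English description precedes it below -/
import Mathlib

section
/- (Theorem: CP1 for Update methods) Suppose the inner component (Meth₂, S, Do₂, IT₂) satisfies TP1: Do₂(IT₂(m2,m1), Do₂(m1,s)) = Do₂(IT₂(m1,m2), Do₂(m2,s)) for all s, m1, m2. Define Update methods on states st : I → S as pairs (i, m) with i : I, m : Meth₂, with Do((i,m), st) = fun k => if k = i then Do₂(m, st k) else st k, and IT((i,m1),(j,m2)) = (i, IT₂(m1,m2)) if i = j, else (i, m1). Then TP1 holds for Update methods: Do(IT(u2,u1), Do(u1,st)) = Do(IT(u1,u2), Do(u2,st)) for all st, u1, u2. -/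
/-!
An update acts on a single coordinate. Updates at distinct indices touch disjoint coordinates, so they
commute and the transformation leaves them unchanged; updates at the same index compose on that
coordinate alone, where the claim is TP1 for the inner component.
-/

variable {I S Meth₂ : Type} [DecidableEq I]

def CompDo (Do₂ : Meth₂ → S → S) (u : I × Meth₂) (st : I → S) : I → S :=
  fun k => if k = u.1 then Do₂ u.2 (st k) else st k

def CompIT (IT₂ : Meth₂ → Meth₂ → Meth₂) (u1 u2 : I × Meth₂) : I × Meth₂ :=
  if u1.1 = u2.1 then (u1.1, IT₂ u1.2 u2.2) else u1

theorem compDo_eq_update (Do₂ : Meth₂ → S → S) (i : I) (m : Meth₂) (st : I → S) :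
    CompDo Do₂ (i, m) st = Function.update st i (Do₂ m (st i)) := by
  funext k
  by_cases hk : k = i
  · subst hk; simp [CompDo]
  · simp [CompDo, hk]

theorem compDo_compDo_self (Do₂ : Meth₂ → S → S) (i : I) (m m' : Meth₂) (st : I → S) :
    CompDo Do₂ (i, m') (CompDo Do₂ (i, m) st) = Function.update st i (Do₂ m' (Do₂ m (st i))) := by
  rw [compDo_eq_update, compDo_eq_update, Function.update_self, Function.update_idem]

theorem compDo_comm_of_ne (Do₂ : Meth₂ → S → S) {i j : I} (h : i ≠ j) (m₁ m₂ : Meth₂)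
    (st : I → S) :
    CompDo Do₂ (i, m₁) (CompDo Do₂ (j, m₂) st) = CompDo Do₂ (j, m₂) (CompDo Do₂ (i, m₁) st) := by
  simp only [compDo_eq_update, Function.update_of_ne h, Function.update_of_ne h.symm]
  exact Function.update_comm h.symm _ _ _

theorem compIT_self (IT₂ : Meth₂ → Meth₂ → Meth₂) (i : I) (m₁ m₂ : Meth₂) :
    CompIT IT₂ (i, m₁) (i, m₂) = (i, IT₂ m₁ m₂) :=
  if_pos rfl

theorem compIT_of_ne (IT₂ : Meth₂ → Meth₂ → Meth₂) {i j : I} (h : i ≠ j) (m₁ m₂ : Meth₂) :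
    CompIT IT₂ (i, m₁) (j, m₂) = (i, m₁) :=
  if_neg h

theorem comp_TP1 (Do₂ : Meth₂ → S → S) (IT₂ : Meth₂ → Meth₂ → Meth₂)
    (hTP1 : ∀ (s : S) (m1 m2 : Meth₂),
      Do₂ (IT₂ m2 m1) (Do₂ m1 s) = Do₂ (IT₂ m1 m2) (Do₂ m2 s))
    (st : I → S) (u1 u2 : I × Meth₂) :
    CompDo Do₂ (CompIT IT₂ u2 u1) (CompDo Do₂ u1 st) =
      CompDo Do₂ (CompIT IT₂ u1 u2) (CompDo Do₂ u2 st) := by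
  obtain ⟨i, m1⟩ := u1
  obtain ⟨j, m2⟩ := u2
  by_cases hij : i = j
  · subst hij
    rw [compIT_self, compIT_self, compDo_compDo_self, compDo_compDo_self, hTP1]
  · rw [compIT_of_ne IT₂ hij, compIT_of_ne IT₂ (Ne.symm hij)]
    exact (compDo_comm_of_ne Do₂ hij m1 m2 st).symm
end

section
/- (Theorem: CP2 for Update methods) Suppose the inner component satisfies TP2: IT₂(IT₂(m,m1), IT₂(m2,m1)) = IT₂(IT₂(m,m2), IT₂(m1,m2)) for all m, m1, m2. With composite methods (i, m) : I × Meth₂ and IT((i,m1),(j,m2)) = (i, IT₂(m1,m2)) if i = j else (i, m1), then TP2 holds for composite methods: IT(IT(u,u1), IT(u2,u1)) = IT(IT(u,u2), IT(u1,u2)) for all u, u1, u2. -/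
/-! `CompIT` acts only when the keys coincide and always keeps the key of its first argument.
If `u` and `u2` have different keys, both sides of TP2 therefore collapse to `CompIT IT₂ u u1`
(and symmetrically when `u` and `u1` differ); if all three keys agree, the identity is TP2 for
`IT₂` on the second components. -/

variable {I S Meth₂ : Type} [DecidableEq I]

section CompIT

variable (IT₂ : Meth₂ → Meth₂ → Meth₂) {u v w : I × Meth₂}

@[simp]
theorem compIT_fst (u v : I × Meth₂) : (CompIT IT₂ u v).1 = u.1 := by
  unfold CompIT
  split_ifs <;> rfl

theorem compIT_of_fst_ne (h : u.1 ≠ v.1) : CompIT IT₂ u v = u :=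
  if_neg h

theorem compIT_compIT_of_fst_ne (h : u.1 ≠ w.1) :
    CompIT IT₂ (CompIT IT₂ u v) (CompIT IT₂ w v) = CompIT IT₂ u v :=
  compIT_of_fst_ne IT₂ (by simpa using h)

theorem compIT_TP2_of_fst_ne (h : u.1 ≠ w.1) :
    CompIT IT₂ (CompIT IT₂ u v) (CompIT IT₂ w v) =
      CompIT IT₂ (CompIT IT₂ u w) (CompIT IT₂ v w) := by
  rw [compIT_compIT_of_fst_ne IT₂ h, compIT_of_fst_ne IT₂ h]
  by_cases hvw : v.1 = w.1
  · have huv : u.1 ≠ v.1 := hvw ▸ h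
    rw [compIT_of_fst_ne IT₂ huv, compIT_of_fst_ne IT₂ (by simpa using huv)]
  · rw [compIT_of_fst_ne IT₂ hvw]

end CompIT

theorem comp_TP2 (IT₂ : Meth₂ → Meth₂ → Meth₂)
    (hTP2 : ∀ m m1 m2 : Meth₂,
      IT₂ (IT₂ m m1) (IT₂ m2 m1) = IT₂ (IT₂ m m2) (IT₂ m1 m2))
    (u u1 u2 : I × Meth₂) :
    CompIT IT₂ (CompIT IT₂ u u1) (CompIT IT₂ u2 u1) =
      CompIT IT₂ (CompIT IT₂ u u2) (CompIT IT₂ u1 u2) := by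
  by_cases h2 : u.1 = u2.1
  · by_cases h1 : u.1 = u1.1
    · obtain ⟨i, m⟩ := u
      obtain ⟨_, m1⟩ := u1
      obtain ⟨_, m2⟩ := u2
      dsimp only at h1 h2
      subst h1 h2
      simp [CompIT, hTP2]
    · exact (compIT_TP2_of_fst_ne IT₂ h1).symm
  · exact compIT_TP2_of_fst_ne IT₂ h2
end

section
/- TP1 and TP2 together imply convergence for three concurrent operations: if (Do, IT) satisfies TP1 and TP2, then for any state st and operations m1, m2, m3, executing the sequence [m1; IT(m2,m1); IT*(m3,[m1; IT(m2,m1)])] on st yields the same state as executing [m2; IT(m1,m2); IT*(m3,[m2; IT(m1,m2)])] on st, where IT*(m,[]) = m and IT*(m, a::l) = IT*(IT(m,a), l). -/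
variable {Meth State : Type}

def DoList (Do : Meth → State → State) (l : List Meth) (st : State) : State :=
  l.foldl (fun s m => Do m s) st

def ITstar (IT : Meth → Meth → Meth) (m : Meth) : List Meth → Meth
  | [] => m
  | a :: l => ITstar IT (IT m a) l

theorem DoList_concat (Do : Meth → State → State) (l : List Meth) (m : Meth) (st : State) :
    DoList Do (l ++ [m]) st = Do m (DoList Do l st) :=
  List.foldl_concat ..

theorem ITstar_pair (IT : Meth → Meth → Meth) (m a b : Meth) :
    ITstar IT m [a, b] = IT (IT m a) b :=
  rfl

theorem DoList_pair (Do : Meth → State → State) (a b : Meth) (st : State) :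
    DoList Do [a, b] st = Do b (Do a st) :=
  rfl

theorem tp1_tp2_three_ops (Do : Meth → State → State) (IT : Meth → Meth → Meth)
    (hTP1 : ∀ (st : State) (m1 m2 : Meth),
      Do (IT m2 m1) (Do m1 st) = Do (IT m1 m2) (Do m2 st))
    (hTP2 : ∀ m m1 m2 : Meth,
      IT (IT m m1) (IT m2 m1) = IT (IT m m2) (IT m1 m2))
    (st : State) (m1 m2 m3 : Meth) :
    DoList Do [m1, IT m2 m1, ITstar IT m3 [m1, IT m2 m1]] st =
      DoList Do [m2, IT m1 m2, ITstar IT m3 [m2, IT m1 m2]] st := by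
  have hprefix : DoList Do [m1, IT m2 m1] st = DoList Do [m2, IT m1 m2] st := by
    simpa only [DoList_pair] using hTP1 st m1 m2
  have hthird : ITstar IT m3 [m1, IT m2 m1] = ITstar IT m3 [m2, IT m1 m2] := by
    simpa only [ITstar_pair] using hTP2 m3 m1 m2
  calc DoList Do ([m1, IT m2 m1] ++ [ITstar IT m3 [m1, IT m2 m1]]) st
      = Do (ITstar IT m3 [m1, IT m2 m1]) (DoList Do [m1, IT m2 m1] st) := DoList_concat ..
    _ = Do (ITstar IT m3 [m2, IT m1 m2]) (DoList Do [m2, IT m1 m2] st) := by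
      rw [hprefix, hthird]
    _ = DoList Do ([m2, IT m1 m2] ++ [ITstar IT m3 [m2, IT m1 m2]]) st :=
      (DoList_concat ..).symm
end
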